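/- arXiv:1706.07907 — 2 statements merged into one kernel-verified Lean document; each statement's English description precedes it below -/
import Mathlib

section
/- Let μ, τ̃⁰ > 0 and define τ̃^{k+1} = τ̃ᵏ / √(1 + μ τ̃ᵏ) for k ≥ 0. Then there exist constants c₁, c₂ > 0 such that c₁/k ≤ τ̃ᵏ ≤ c₂/k for all k ≥ 1; in particular, 1/τ̃ᵏ = Θ(k). -/
/-! In terms of `uₖ = 1/τ̃ᵏ` the recursion reads `uₖ₊₁ = √(uₖ² + μ uₖ)`. Since
`(u + μ/2)² = u² + μu + μ²/4`, each step adds at most `μ/2` to `u`; and since `u` increases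
from `u₀`, each step adds at least `δ = μ u₀ / (2u₀ + μ)`. Hence `u₀ + kδ ≤ uₖ ≤ u₀ + kμ/2`,
and `uₖ` grows linearly in `k`. -/

open Real

theorem sqrt_sq_add_mul_le {u μ : ℝ} (hu : 0 ≤ u) (hμ : 0 ≤ μ) :
    √(u ^ 2 + μ * u) ≤ u + μ / 2 :=
  (sqrt_le_left (by positivity)).2 (by nlinarith)

theorem le_sqrt_sq_add_mul {u μ : ℝ} (hu : 0 ≤ u) (hμ : 0 ≤ μ) : u ≤ √(u ^ 2 + μ * u) :=
  le_sqrt_of_sq_le (by nlinarith)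

theorem add_le_sqrt_sq_add_mul {u₀ u μ : ℝ} (hμ : 0 < μ) (hu₀ : 0 < u₀) (hu : u₀ ≤ u) :
    u + μ * u₀ / (2 * u₀ + μ) ≤ √(u ^ 2 + μ * u) := by
  apply le_sqrt_of_sq_le
  have hgap : u ^ 2 + μ * u - (u + μ * u₀ / (2 * u₀ + μ)) ^ 2
      = μ ^ 2 * (u * (2 * u₀ + μ) - u₀ ^ 2) / (2 * u₀ + μ) ^ 2 := by
    field_simp; ring
  have hnum : 0 ≤ u * (2 * u₀ + μ) - u₀ ^ 2 := by nlinarith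
  rw [← sub_nonneg, hgap]
  positivity

theorem le_add_mul_of_le_add {u : ℕ → ℝ} {a : ℝ} (h : ∀ k, u (k + 1) ≤ u k + a) :
    ∀ k : ℕ, u k ≤ u 0 + k * a
  | 0 => by simp
  | k + 1 => by push_cast; linarith [h k, le_add_mul_of_le_add h k]

theorem add_mul_le_of_add_le {u : ℕ → ℝ} {a : ℝ} (h : ∀ k, u k + a ≤ u (k + 1)) :
    ∀ k : ℕ, u 0 + k * a ≤ u k
  | 0 => by simp
  | k + 1 => by push_cast; linarith [h k, add_mul_le_of_add_le h k]

theorem inv_div_sqrt_one_add_mul {t μ : ℝ} (ht : 0 < t) :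
    (t / √(1 + μ * t))⁻¹ = √(t⁻¹ ^ 2 + μ * t⁻¹) := by
  have : t⁻¹ ^ 2 + μ * t⁻¹ = (1 + μ * t) / t ^ 2 := by field_simp
  rw [inv_div, this, sqrt_div' _ (sq_nonneg t), sqrt_sq ht.le]

theorem pos_of_eq_div_sqrt_one_add_mul {μ : ℝ} (hμ : 0 ≤ μ) {τ : ℕ → ℝ} (hτ0 : 0 < τ 0)
    (hrec : ∀ k, τ (k + 1) = τ k / √(1 + μ * τ k)) : ∀ k, 0 < τ k
  | 0 => hτ0
  | k + 1 => by
    have := pos_of_eq_div_sqrt_one_add_mul hμ hτ0 hrec k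
    rw [hrec]; positivity

/-- For `μ, τ̃⁰ > 0` and `τ̃^{k+1} = τ̃ᵏ/√(1+μτ̃ᵏ)`, there exist constants
`c₁, c₂ > 0` with `c₁/k ≤ τ̃ᵏ ≤ c₂/k` for all `k ≥ 1`; i.e. `1/τ̃ᵏ = Θ(k)`. -/
theorem stmt_7 (μ : ℝ) (hμ : 0 < μ) (τt : ℕ → ℝ) (hτt0 : 0 < τt 0)
    (hrec : ∀ k, τt (k + 1) = τt k / Real.sqrt (1 + μ * τt k)) :
    ∃ c₁ c₂ : ℝ, 0 < c₁ ∧ 0 < c₂ ∧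
      ∀ k : ℕ, 1 ≤ k → c₁ / k ≤ τt k ∧ τt k ≤ c₂ / k := by
  have hτ := pos_of_eq_div_sqrt_one_add_mul hμ.le hτt0 hrec
  set u : ℕ → ℝ := fun k ↦ (τt k)⁻¹ with hu_def
  have hu (k : ℕ) : 0 < u k := inv_pos.2 (hτ k)
  have hstep (k : ℕ) : u (k + 1) = √(u k ^ 2 + μ * u k) := by
    simp only [hu_def, hrec, inv_div_sqrt_one_add_mul (hτ k)]
  have hmono : Monotone u := monotone_nat_of_le_succ fun k ↦
    hstep k ▸ le_sqrt_sq_add_mul (hu k).le hμ.le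
  set δ := μ * u 0 / (2 * u 0 + μ)
  have hδ : 0 < δ := by have := hu 0; positivity
  have hupper := le_add_mul_of_le_add fun k ↦ hstep k ▸ sqrt_sq_add_mul_le (hu k).le hμ.le
  have hlower := add_mul_le_of_add_le (a := δ) fun k ↦
    hstep k ▸ add_le_sqrt_sq_add_mul hμ (hu 0) (hmono (Nat.zero_le k))
  refine ⟨(u 0 + μ / 2)⁻¹, δ⁻¹, by have := hu 0; positivity, inv_pos.2 hδ, fun k hk ↦ ?_⟩
  have hk' : (1 : ℝ) ≤ k := by exact_mod_cast hk
  have hτu : τt k = (u k)⁻¹ := (inv_inv _).symm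
  have hdiv (a : ℝ) : a⁻¹ / k = (a * k)⁻¹ := by rw [mul_inv, div_eq_mul_inv]
  rw [hτu, hdiv, hdiv]
  constructor
  · refine inv_anti₀ (hu k) ?_
    nlinarith [hupper k, hu 0]
  · refine inv_anti₀ (by positivity) ?_
    nlinarith [hlower k, hu 0]
end

section
/- Let f_i : ℝⁿ → ℝ, i = 1,…,N, be convex and differentiable with L_i-Lipschitz gradients, such that f̄(x) = Σᵢ f_i(x) is strongly convex with modulus μ̄ > 0. Let C ⊆ ℝ^{nN} be the consensus cone {x : x₁ = ⋯ = x_N} and define f(x) = Σᵢ f_i(x_i) and f_α(x) = f(x) + (α/2)d_C(x)². Then for any α > (4/μ̄)Σᵢ L_i², f_α satisfies ⟨∇f_α(x) - ∇f_α(x*), x - x*⟩ ≥ μ_α ‖x - x*‖² for all x, where x* = 1_N ⊗ x* with x* the minimizer of f̄, L̄ = √(Σᵢ L_i²/N), and μ_α = (μ̄/N + α)/2 - √(((μ̄/N - α)/2)² + 4L̄²) > 0. -/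
/-!
Write `P` for the orthogonal projection onto the consensus subspace `C`. The penalty `(α/2) d_C²`
has gradient `α (x - P x)`, so testing `∇f_α x - ∇f_α x*` against `x - x*` gives
`Σᵢ ⟨∇fᵢ(xᵢ) - ∇fᵢ(x*), xᵢ - x*⟩ + α ‖x - P x‖²`. Split each `xᵢ - x*` through the average `x̄`
of the blocks: monotonicity of `∇fᵢ`, the Lipschitz bounds, Cauchy–Schwarz and strong
monotonicity of `∇f̄` bound the sum below by `μ̄ ‖x̄ - x*‖² - 2 √(Σᵢ Lᵢ²) ‖x̄ - x*‖ ‖x - P x‖`.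
Since `‖x - x*‖² = N ‖x̄ - x*‖² + ‖x - P x‖²`, what is left is a quadratic form in the two
norms, bounded below by the smaller eigenvalue of its matrix, which `μ_α` underestimates.
-/

open scoped RealInnerProductSpace NNReal

section Projection

variable {F : Type*} [NormedAddCommGroup F] [InnerProductSpace ℝ F]
  (K : Submodule ℝ F) [K.HasOrthogonalProjection]

theorem Submodule.infDist_eq_norm_sub_starProjection (x : F) :
    Metric.infDist x K = ‖x - K.starProjection x‖ := by
  rw [Metric.infDist_eq_iInf, K.starProjection_minimal]
  simp_rw [dist_eq_norm]
  rfl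

theorem Submodule.norm_sub_sq_eq_of_mem {w : F} (hw : w ∈ K) (x : F) :
    ‖x - w‖ ^ 2 = ‖K.starProjection x - w‖ ^ 2 + ‖x - K.starProjection x‖ ^ 2 := by
  have horth := K.starProjection_inner_eq_zero x _ (K.sub_mem (K.starProjection_apply_mem x) hw)
  rw [← sub_add_sub_cancel x (K.starProjection x) w, sq,
    norm_add_sq_eq_norm_sq_add_norm_sq_real horth]
  ring

theorem Submodule.inner_add_smul_sub_starProjection_sub {w : F} (hw : w ∈ K) (G : F → F)
    (α : ℝ) (x : F) :
    ⟪G x + α • (x - K.starProjection x) - (G w + α • (w - K.starProjection w)), x - w⟫ =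
      ⟪G x - G w, x - w⟫ + α * ‖x - K.starProjection x‖ ^ 2 := by
  have horth := K.starProjection_inner_eq_zero x _ (K.sub_mem (K.starProjection_apply_mem x) hw)
  rw [K.starProjection_eq_self_iff.2 hw, sub_self, smul_zero, add_zero, add_sub_right_comm,
    inner_add_left, real_inner_smul_left, ← sub_add_sub_cancel x (K.starProjection x) w,
    inner_add_right (x - K.starProjection x), horth, add_zero, real_inner_self_eq_norm_sq,
    sub_add_sub_cancel]

end Projection

section Gradient

variable {F : Type*} [NormedAddCommGroup F] [InnerProductSpace ℝ F] [CompleteSpace F]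

theorem HasGradientAt.add {f g : F → ℝ} {f' g' x : F} (hf : HasGradientAt f f' x)
    (hg : HasGradientAt g g' x) : HasGradientAt (fun y => f y + g y) (f' + g') x := by
  rw [hasGradientAt_iff_hasFDerivAt] at *
  rw [map_add]
  exact hf.add hg

theorem HasGradientAt.const_mul {f : F → ℝ} {f' x : F} (c : ℝ) (hf : HasGradientAt f f' x) :
    HasGradientAt (fun y => c * f y) (c • f') x := by
  rw [hasGradientAt_iff_hasFDerivAt] at *
  simpa only [map_smul] using hf.const_mul c

theorem HasGradientAt.sum {ι : Type*} {s : Finset ι} {f : ι → F → ℝ} {f' : ι → F} {x : F}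
    (hf : ∀ i ∈ s, HasGradientAt (f i) (f' i) x) :
    HasGradientAt (fun y => ∑ i ∈ s, f i y) (∑ i ∈ s, f' i) x := by
  simp only [hasGradientAt_iff_hasFDerivAt, map_sum] at *
  exact HasFDerivAt.fun_sum hf

theorem hasGradientAt_sum_apply {ι E : Type*} [Fintype ι] [NormedAddCommGroup E]
    [InnerProductSpace ℝ E] [CompleteSpace E] {f : ι → E → ℝ} (hf : ∀ i, Differentiable ℝ (f i))
    (x : PiLp 2 fun _ : ι => E) :
    HasGradientAt (fun z : PiLp 2 fun _ : ι => E => ∑ i, f i (z i))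
      (WithLp.toLp 2 fun i => gradient (f i) (x i)) x := by
  rw [hasGradientAt_iff_hasFDerivAt]
  have hsum := HasFDerivAt.fun_sum (u := Finset.univ) fun i _ =>
    (hf i (x i)).hasGradientAt.hasFDerivAt.comp x
      ((PiLp.proj (𝕜 := ℝ) 2 (fun _ : ι => E) i).hasFDerivAt (x := x))
  refine hsum.congr_fderiv ?_
  ext v
  simp [PiLp.inner_apply]

variable (K : Submodule ℝ F) [K.HasOrthogonalProjection]

theorem hasGradientAt_norm_sub_starProjection_sq (x : F) :
    HasGradientAt (fun y => ‖y - K.starProjection y‖ ^ 2) ((2 : ℝ) • (x - K.starProjection x))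
      x := by
  rw [hasGradientAt_iff_hasFDerivAt]
  refine ((hasFDerivAt_id x).sub K.starProjection.hasFDerivAt).norm_sq.congr_fderiv ?_
  ext v
  have horth := K.starProjection_inner_eq_zero x _ (K.starProjection_apply_mem v)
  simpa [inner_sub_left, inner_sub_right, real_inner_smul_left] using horth

theorem gradient_add_infDist_sq {h : F → ℝ} {h' x : F} (hh : HasGradientAt h h' x) (α : ℝ) :
    gradient (fun y => h y + α / 2 * Metric.infDist y K ^ 2) x =
      h' + α • (x - K.starProjection x) := by
  simp_rw [K.infDist_eq_norm_sub_starProjection]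
  rw [(hh.add ((hasGradientAt_norm_sub_starProjection_sq K x).const_mul (α / 2))).gradient,
    smul_smul, div_mul_cancel₀ α two_ne_zero]

end Gradient

section Convexity

variable {E : Type*} [NormedAddCommGroup E] [InnerProductSpace ℝ E] [CompleteSpace E]
  {f : E → ℝ}

theorem ConvexOn.inner_gradient_le_sub (hf : ConvexOn ℝ Set.univ f) {a : E}
    (hd : DifferentiableAt ℝ f a) (b : E) : ⟪gradient f a, b - a⟫ ≤ f b - f a := by
  have hline : HasDerivAt (f ∘ AffineMap.lineMap (k := ℝ) a b) ⟪gradient f a, b - a⟫ 0 := by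
    simpa only [InnerProductSpace.toDual_apply_apply] using
      hd.hasGradientAt.hasFDerivAt.comp_hasDerivAt_of_eq 0 AffineMap.hasDerivAt_lineMap
        (AffineMap.lineMap_apply_zero a b).symm
  have := (hf.comp_affineMap (AffineMap.lineMap a b)).deriv_le_slope (Set.mem_univ 0)
    (Set.mem_univ 1) one_pos hline.differentiableAt
  simpa [hline.deriv, slope_def_field] using this

theorem ConvexOn.inner_gradient_sub_nonneg (hf : ConvexOn ℝ Set.univ f)
    (hd : Differentiable ℝ f) (a b : E) : 0 ≤ ⟪gradient f a - gradient f b, a - b⟫ := by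
  have hab := hf.inner_gradient_le_sub (hd a) b
  have hba := hf.inner_gradient_le_sub (hd b) a
  rw [← neg_sub a b, inner_neg_right] at hab
  rw [inner_sub_left]
  linarith

end Convexity

section MonotoneOperators

variable {E : Type*} [NormedAddCommGroup E] [InnerProductSpace ℝ E]

theorem inner_sub_ge_of_strongly_convex {f : E → ℝ} {g : E → E} {μ : ℝ}
    (h : ∀ x y, f x ≥ f y + ⟪g y, x - y⟫ + μ / 2 * ‖x - y‖ ^ 2) (a b : E) :
    μ * ‖a - b‖ ^ 2 ≤ ⟪g a - g b, a - b⟫ := by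
  have hab := h a b
  have hba := h b a
  rw [← neg_sub a b, inner_neg_right, norm_neg] at hba
  rw [inner_sub_left]
  linarith

theorem inner_sub_ge_of_monotone_of_lipschitzWith {g : E → E} {K : ℝ≥0}
    (hmono : ∀ a b, 0 ≤ ⟪g a - g b, a - b⟫) (hlip : LipschitzWith K g) (a m s : E) :
    ⟪g m - g s, m - s⟫ - 2 * K * ‖a - m‖ * ‖m - s‖ ≤ ⟪g a - g s, a - s⟫ := by
  have h₁ : -(K * ‖a - m‖ * ‖m - s‖) ≤ ⟪g a - g m, m - s⟫ := by
    refine neg_le_of_abs_le ((abs_real_inner_le_norm _ _).trans ?_)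
    gcongr
    exact hlip.norm_sub_le a m
  have h₂ : -(K * ‖a - m‖ * ‖m - s‖) ≤ ⟪g m - g s, a - m⟫ := by
    refine neg_le_of_abs_le ((abs_real_inner_le_norm _ _).trans ?_)
    rw [mul_right_comm]
    gcongr
    exact hlip.norm_sub_le m s
  have hsplit : ⟪g a - g s, a - s⟫ = ⟪g a - g m, a - m⟫ + ⟪g a - g m, m - s⟫
      + ⟪g m - g s, a - m⟫ + ⟪g m - g s, m - s⟫ := by
    rw [← sub_add_sub_cancel a m s, ← sub_add_sub_cancel (g a) (g m) (g s)]
    simp only [inner_add_left, inner_add_right]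
    ring
  linarith [hmono a m]

theorem sum_inner_sub_ge_of_strongly_monotone_sum {ι : Type*} [Fintype ι] {g : ι → E → E}
    {L : ι → ℝ≥0} {μ : ℝ}
    (hmono : ∀ i a b, 0 ≤ ⟪g i a - g i b, a - b⟫) (hlip : ∀ i, LipschitzWith (L i) (g i))
    (hstrong : ∀ a b, μ * ‖a - b‖ ^ 2 ≤ ⟪∑ i, g i a - ∑ i, g i b, a - b⟫)
    (x : ι → E) (m s : E) :
    μ * ‖m - s‖ ^ 2 - 2 * √(∑ i, (L i : ℝ) ^ 2) * √(∑ i, ‖x i - m‖ ^ 2) * ‖m - s‖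
      ≤ ∑ i, ⟪g i (x i) - g i s, x i - s⟫ := by
  have hcs := mul_le_mul_of_nonneg_right
    (Real.sum_mul_le_sqrt_mul_sqrt Finset.univ (fun i => (L i : ℝ)) fun i => ‖x i - m‖)
    (norm_nonneg (m - s))
  have hms : ⟪∑ i, g i m - ∑ i, g i s, m - s⟫ = ∑ i, ⟪g i m - g i s, m - s⟫ := by
    rw [← Finset.sum_sub_distrib, sum_inner]
  calc μ * ‖m - s‖ ^ 2 - 2 * √(∑ i, (L i : ℝ) ^ 2) * √(∑ i, ‖x i - m‖ ^ 2) * ‖m - s‖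
      ≤ ∑ i, ⟪g i m - g i s, m - s⟫ - 2 * (∑ i, L i * ‖x i - m‖) * ‖m - s‖ := by
        linarith [hstrong m s]
    _ = ∑ i, (⟪g i m - g i s, m - s⟫ - 2 * L i * ‖x i - m‖ * ‖m - s‖) := by
        rw [Finset.sum_sub_distrib, Finset.mul_sum, Finset.sum_mul]
        congr 1
        exact Finset.sum_congr rfl fun i _ => by ring
    _ ≤ ∑ i, ⟪g i (x i) - g i s, x i - s⟫ :=
        Finset.sum_le_sum fun i _ =>
          inner_sub_ge_of_monotone_of_lipschitzWith (hmono i) (hlip i) (x i) m s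

end MonotoneOperators

section MinEigenvalue

theorem quadratic_form_nonneg {p q l : ℝ} (hp : 0 ≤ p) (hq : 0 ≤ q) (h : l ^ 2 ≤ p * q)
    (a b : ℝ) : 0 ≤ p * a ^ 2 - 2 * l * a * b + q * b ^ 2 := by
  rcases (add_nonneg hp hq).eq_or_lt with hpq | hpq
  · have hl : l = 0 := by nlinarith
    subst hl
    nlinarith
  · -- `(p + q)` times the form is `(p a - l b)² + (q b - l a)² + (p q - l²)(a² + b²)`
    refine nonneg_of_mul_nonneg_right ?_ hpq
    nlinarith [sq_nonneg (p * a - l * b), sq_nonneg (q * b - l * a), sq_nonneg a, sq_nonneg b]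

/-- The smaller eigenvalue of the symmetric matrix `!![m, -√d; -√d, α]`. -/
noncomputable def minEigenvalue (m α d : ℝ) : ℝ := (m + α) / 2 - √(((m - α) / 2) ^ 2 + d)

variable {m α d : ℝ}

theorem minEigenvalue_pos (hm : 0 < m) (hd : 0 ≤ d) (h : d < m * α) :
    0 < minEigenvalue m α d := by
  have hα : 0 < α := pos_of_mul_pos_right (hd.trans_lt h) hm.le
  rw [minEigenvalue, sub_pos, Real.sqrt_lt' (by positivity)]
  nlinarith

theorem minEigenvalue_mul_le {l : ℝ} (hl : l ^ 2 ≤ d) (a b : ℝ) :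
    minEigenvalue m α d * (a ^ 2 + b ^ 2) ≤ m * a ^ 2 - 2 * l * a * b + α * b ^ 2 := by
  set r := √(((m - α) / 2) ^ 2 + d)
  have hr : r ^ 2 = ((m - α) / 2) ^ 2 + d := Real.sq_sqrt (by nlinarith)
  obtain ⟨hp, hq⟩ := abs_le.mp (Real.abs_le_sqrt (by nlinarith) : |(m - α) / 2| ≤ r)
  -- `m` and `α` minus the eigenvalue are `r ± (m - α) / 2`, whose product is `d`
  have := quadratic_form_nonneg (p := r + (m - α) / 2) (q := r - (m - α) / 2) (l := l)
    (by linarith) (by linarith) (by nlinarith) a b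
  rw [minEigenvalue]
  nlinarith

theorem minEigenvalue_div_pos {N μ S : ℝ} (hN : 0 < N) (hμ : 0 < μ) (hS : 0 ≤ S)
    (h : 4 / μ * S < α) : 0 < minEigenvalue (μ / N) α (4 * √(S / N) ^ 2) := by
  refine minEigenvalue_pos (by positivity) (by positivity) ?_
  rw [Real.sq_sqrt (by positivity), ← mul_div_assoc, div_mul_eq_mul_div,
    div_lt_div_iff_of_pos_right hN]
  rwa [div_mul_eq_mul_div, div_lt_iff₀ hμ, mul_comm α] at h

theorem minEigenvalue_div_mul_le {N μ S : ℝ} (hN : 0 < N) (hS : 0 ≤ S) (c b : ℝ) :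
    minEigenvalue (μ / N) α (4 * √(S / N) ^ 2) * (N * c ^ 2 + b ^ 2) ≤
      μ * c ^ 2 - 2 * √S * c * b + α * b ^ 2 := by
  have hl : √(S / N) * (√N * c) = √S * c := by
    rw [← mul_assoc, ← Real.sqrt_mul (by positivity), div_mul_cancel₀ S hN.ne']
  have := minEigenvalue_mul_le (m := μ / N) (α := α) (d := 4 * √(S / N) ^ 2) (l := √(S / N))
    (by nlinarith [sq_nonneg √(S / N)]) (√N * c) b
  rw [mul_pow, Real.sq_sqrt hN.le, ← mul_assoc, div_mul_cancel₀ μ hN.ne'] at this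
  linarith [congrArg (· * b) hl]

end MinEigenvalue

theorem PiLp.norm_toLp_const_sq {ι E : Type*} [Fintype ι] [NormedAddCommGroup E] (c : E) :
    ‖WithLp.toLp 2 (fun _ : ι => c)‖ ^ 2 = Fintype.card ι * ‖c‖ ^ 2 := by
  simp [PiLp.norm_sq_eq_of_L2]

section Consensus

variable (ι E : Type*) [NormedAddCommGroup E] [InnerProductSpace ℝ E]

def consensus : Submodule ℝ (PiLp 2 fun _ : ι => E) where
  carrier := {z | ∃ c, ∀ i, z i = c}
  add_mem' := by
    rintro z w ⟨c, hc⟩ ⟨d, hd⟩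
    exact ⟨c + d, fun i => by simp [hc, hd]⟩
  zero_mem' := ⟨0, fun _ => rfl⟩
  smul_mem' := by
    rintro r z ⟨c, hc⟩
    exact ⟨r • c, fun i => by simp [hc]⟩

variable {ι E}

theorem toLp_const_mem_consensus (c : E) : WithLp.toLp 2 (fun _ : ι => c) ∈ consensus ι E :=
  ⟨c, fun _ => rfl⟩

variable [Fintype ι]

theorem inner_sub_mean_eq_zero (z : PiLp 2 fun _ : ι => E) {w : PiLp 2 fun _ : ι => E}
    (hw : w ∈ consensus ι E) :
    ⟪z - WithLp.toLp 2 (fun _ => (Fintype.card ι : ℝ)⁻¹ • ∑ i, z i), w⟫ = 0 := by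
  obtain ⟨c, hc⟩ := hw
  have hsum : ∑ i, (z i - (Fintype.card ι : ℝ)⁻¹ • ∑ j, z j) = 0 := by
    rw [Finset.sum_sub_distrib, Finset.sum_const, Finset.card_univ, ← Nat.cast_smul_eq_nsmul ℝ,
      sub_eq_zero]
    rcases isEmpty_or_nonempty ι with hι | hι
    · simp
    · rw [smul_smul, mul_inv_cancel₀ (by positivity), one_smul]
  simp only [PiLp.inner_apply, hc, PiLp.sub_apply, ← sum_inner, hsum, inner_zero_left]

instance : (consensus ι E).HasOrthogonalProjection :=
  ⟨fun z => ⟨_, toLp_const_mem_consensus _,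
    (Submodule.mem_orthogonal' _ _).2 fun _ => inner_sub_mean_eq_zero z⟩⟩

theorem starProjection_consensus_apply (z : PiLp 2 fun _ : ι => E) :
    (consensus ι E).starProjection z =
      WithLp.toLp 2 (fun _ => (Fintype.card ι : ℝ)⁻¹ • ∑ i, z i) :=
  Submodule.eq_starProjection_of_mem_of_inner_eq_zero (toLp_const_mem_consensus _)
    fun _ => inner_sub_mean_eq_zero z

theorem norm_sub_starProjection_consensus (z : PiLp 2 fun _ : ι => E) :
    ‖z - (consensus ι E).starProjection z‖ =
      √(∑ i, ‖z i - (Fintype.card ι : ℝ)⁻¹ • ∑ j, z j‖ ^ 2) := by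
  simp [PiLp.norm_eq_of_L2, starProjection_consensus_apply]

theorem norm_sub_toLp_const_sq (z : PiLp 2 fun _ : ι => E) (s : E) :
    ‖z - WithLp.toLp 2 (fun _ => s)‖ ^ 2 =
      Fintype.card ι * ‖(Fintype.card ι : ℝ)⁻¹ • ∑ i, z i - s‖ ^ 2 +
        ‖z - (consensus ι E).starProjection z‖ ^ 2 := by
  rw [(consensus ι E).norm_sub_sq_eq_of_mem (toLp_const_mem_consensus s) z,
    starProjection_consensus_apply, ← PiLp.norm_toLp_const_sq]
  rfl

theorem inner_gradient_sub_add_infDist_consensus_sq [CompleteSpace E] {f : ι → E → ℝ}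
    (hf : ∀ i, Differentiable ℝ (f i)) (α : ℝ) (x : PiLp 2 fun _ : ι => E) (s : E) :
    ⟪gradient (fun z => ∑ i, f i (z i) + α / 2 * Metric.infDist z (consensus ι E) ^ 2) x -
        gradient (fun z => ∑ i, f i (z i) + α / 2 * Metric.infDist z (consensus ι E) ^ 2)
          (WithLp.toLp 2 fun _ => s),
      x - WithLp.toLp 2 fun _ => s⟫ =
      ∑ i, ⟪gradient (f i) (x i) - gradient (f i) s, x i - s⟫ +
        α * ‖x - (consensus ι E).starProjection x‖ ^ 2 := by
  rw [gradient_add_infDist_sq _ (hasGradientAt_sum_apply hf x),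
    gradient_add_infDist_sq _ (hasGradientAt_sum_apply hf _)]
  refine ((consensus ι E).inner_add_smul_sub_starProjection_sub (toLp_const_mem_consensus s)
    (fun z => WithLp.toLp 2 fun i => gradient (f i) (z i)) α x).trans ?_
  simp [PiLp.inner_apply]

end Consensus

theorem stmt_12_general {n N : ℕ} (hN : 0 < N)
    (f : Fin N → (EuclideanSpace ℝ (Fin n) → ℝ)) (L : Fin N → ℝ) (hL : ∀ i, 0 ≤ L i)
    (hconv : ∀ i, ConvexOn ℝ Set.univ (f i))
    (hdiff : ∀ i, Differentiable ℝ (f i))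
    (hlip : ∀ i, LipschitzWith (L i).toNNReal (gradient (f i)))
    (μb : ℝ) (hμb : 0 < μb)
    (hsc : ∀ x y : EuclideanSpace ℝ (Fin n),
      (∑ i, f i x) ≥ (∑ i, f i y) + ⟪gradient (fun z => ∑ i, f i z) y, x - y⟫
        + μb / 2 * ‖x - y‖ ^ 2)
    (xstar : EuclideanSpace ℝ (Fin n))
    (α : ℝ) (hα : 4 / μb * ∑ i, L i ^ 2 < α) :
    let C : Set (PiLp 2 fun _ : Fin N => EuclideanSpace ℝ (Fin n)) :=
      {z | ∃ xb, ∀ i, z i = xb}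
    let fα : (PiLp 2 fun _ : Fin N => EuclideanSpace ℝ (Fin n)) → ℝ :=
      fun z => (∑ i, f i (z i)) + α / 2 * Metric.infDist z C ^ 2
    let Lb : ℝ := Real.sqrt ((∑ i, L i ^ 2) / N)
    let μα : ℝ := (μb / N + α) / 2 - Real.sqrt (((μb / N - α) / 2) ^ 2 + 4 * Lb ^ 2)
    let bxstar : PiLp 2 fun _ : Fin N => EuclideanSpace ℝ (Fin n) := WithLp.toLp 2 (fun _ => xstar)
    0 < μα ∧
      ∀ x, ⟪gradient fα x - gradient fα bxstar, x - bxstar⟫ ≥ μα * ‖x - bxstar‖ ^ 2 := by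
  intro C fα Lb μα bxstar
  set K := consensus (Fin N) (EuclideanSpace ℝ (Fin n))
  have hNpos : (0 : ℝ) < N := by exact_mod_cast hN
  have hL2 : 0 ≤ ∑ i, L i ^ 2 := by positivity
  refine ⟨minEigenvalue_div_pos hNpos hμb hL2 hα, fun x => ?_⟩
  set xbar := (N : ℝ)⁻¹ • ∑ i, x i
  have hinner : ⟪gradient fα x - gradient fα bxstar, x - bxstar⟫ =
      ∑ i, ⟪gradient (f i) (x i) - gradient (f i) xstar, x i - xstar⟫ +
        α * ‖x - K.starProjection x‖ ^ 2 :=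
    inner_gradient_sub_add_infDist_consensus_sq hdiff α x xstar
  have hnorm : ‖x - bxstar‖ ^ 2 = N * ‖xbar - xstar‖ ^ 2 + ‖x - K.starProjection x‖ ^ 2 := by
    simpa using norm_sub_toLp_const_sq x xstar
  rw [gradient_eq fun y => HasGradientAt.sum fun i _ => (hdiff i y).hasGradientAt] at hsc
  have hsep := sum_inner_sub_ge_of_strongly_monotone_sum
    (fun i => (hconv i).inner_gradient_sub_nonneg (hdiff i)) hlip
    (inner_sub_ge_of_strongly_convex hsc) (fun i => x i) xbar xstar
  have hv : √(∑ i, ‖x i - xbar‖ ^ 2) = ‖x - K.starProjection x‖ := by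
    simpa using (norm_sub_starProjection_consensus x).symm
  simp only [Real.coe_toNNReal _ (hL _), hv] at hsep
  have hμα : μα = minEigenvalue (μb / N) α (4 * Lb ^ 2) := rfl
  rw [hinner, hnorm, hμα]
  linarith [minEigenvalue_div_mul_le (α := α) (μ := μb) hNpos hL2
    ‖xbar - xstar‖ ‖x - K.starProjection x‖]

/-- Regularizing the separable sum `f(x) = Σᵢ fᵢ(xᵢ)` by `(α/2)d_C(x)²` (distance to the
consensus subspace `C`) yields a function satisfying the restricted strong convexity
inequality `⟨∇f_α(x) - ∇f_α(x*), x - x*⟩ ≥ μ_α‖x - x*‖²` with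
`μ_α = (μ̄/N + α)/2 - √(((μ̄/N - α)/2)² + 4L̄²) > 0`, for any `α > (4/μ̄)Σᵢ Lᵢ²`,
where `x* = 1_N ⊗ x*` is the stacked minimizer of the strongly convex sum
`f̄(x) = Σᵢ fᵢ(x)` and `L̄ = √(Σᵢ Lᵢ²/N)`. -/
theorem stmt_12 {n N : ℕ} (hN : 0 < N)
    (f : Fin N → (EuclideanSpace ℝ (Fin n) → ℝ)) (L : Fin N → ℝ) (hL : ∀ i, 0 ≤ L i)
    (hconv : ∀ i, ConvexOn ℝ Set.univ (f i))
    (hdiff : ∀ i, Differentiable ℝ (f i))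
    (hlip : ∀ i, LipschitzWith (L i).toNNReal (gradient (f i)))
    (μb : ℝ) (hμb : 0 < μb)
    (hsc : ∀ x y : EuclideanSpace ℝ (Fin n),
      (∑ i, f i x) ≥ (∑ i, f i y) + ⟪gradient (fun z => ∑ i, f i z) y, x - y⟫
        + μb / 2 * ‖x - y‖ ^ 2)
    (xstar : EuclideanSpace ℝ (Fin n)) (hmin : ∀ y, (∑ i, f i xstar) ≤ ∑ i, f i y)
    (α : ℝ) (hα : 4 / μb * ∑ i, L i ^ 2 < α) :
    let C : Set (PiLp 2 fun _ : Fin N => EuclideanSpace ℝ (Fin n)) :=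
      {z | ∃ xb, ∀ i, z i = xb}
    let fα : (PiLp 2 fun _ : Fin N => EuclideanSpace ℝ (Fin n)) → ℝ :=
      fun z => (∑ i, f i (z i)) + α / 2 * Metric.infDist z C ^ 2
    let Lb : ℝ := Real.sqrt ((∑ i, L i ^ 2) / N)
    let μα : ℝ := (μb / N + α) / 2 - Real.sqrt (((μb / N - α) / 2) ^ 2 + 4 * Lb ^ 2)
    let bxstar : PiLp 2 fun _ : Fin N => EuclideanSpace ℝ (Fin n) := WithLp.toLp 2 (fun _ => xstar)
    0 < μα ∧
      ∀ x, ⟪gradient fα x - gradient fα bxstar, x - bxstar⟫ ≥ μα * ‖x - bxstar‖ ^ 2 :=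
  stmt_12_general hN f L hL hconv hdiff hlip μb hμb hsc xstar α hα
end
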